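/- arXiv:1509.00327 — 2 statements merged into one kernel-verified Lean document; each statement's English description precedes it below -/
import Mathlib

section
/- Let p be a prime and let η : ℤₚⁿ → ℤₚᵐ be a homomorphism of free modules over the ring ℤₚ of p-adic integers. Suppose there exist ℤₚ-bases of the domain and codomain in which the matrix of η is diagonal with, for each i ≥ 0, exactly eᵢ diagonal entries of p-adic valuation i, the remaining diagonal entries being zero (Smith normal form; eᵢ is the multiplicity of pⁱ as an elementary divisor of η). For i ≥ 0 define the submodule Mᵢ = { x ∈ ℤₚⁿ : η(x) ∈ pⁱℤₚᵐ }, and for a submodule R ⊆ ℤₚ^ℓ let R̄ = (R + pℤₚ^ℓ)/pℤₚ^ℓ, an 𝔽ₚ-vector space. Then for every i ≥ 0, dim_{𝔽ₚ} M̄ᵢ = dim_{𝔽ₚ} (ker η)‾ + eᵢ + e_{i+1} + ⋯ (the sum over all k ≥ i of e_k). -/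
open Matrix

/-- The dimension over `𝔽ₚ` of the reduction `R̄ = (R + pℤₚ^ℓ)/pℤₚ^ℓ` of a set
`R ⊆ ℤₚ^ℓ`, realized as the image of `R` under coordinatewise reduction mod `p`. -/
noncomputable def dimBar (p : ℕ) [Fact p.Prime] {ℓ : ℕ} (R : Set (Fin ℓ → ℤ_[p])) : ℕ :=
  Module.finrank (ZMod p)
    (Submodule.span (ZMod p)
      ((fun x : Fin ℓ → ℤ_[p] => fun j => PadicInt.toZMod (x j)) '' R))

/-! After the change of bases `D = P A Q`, both `Mᵢ` and `ker η` are images under `Q` of sets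
`{x | D x ∈ Iᵐ}` (for `I = (pⁱ)` and `I = 0`), and `Q` stays invertible mod `p`, so both
dimensions may be computed for the diagonal matrix `D`. There the reduction of `{x | D x ∈ Iᵐ}`
is exactly the coordinate subspace `{y | y j = 0 whenever D_jj ∉ I}`: if `d ∉ I` and `d x ∈ I`
then `x` is not a unit, as `ℤₚ` is local. So `dim M̄ᵢ = n - #{j | D_jj ≠ 0, v(D_jj) < i}` and
`dim (ker η)‾ = n - #{j | D_jj ≠ 0}`, whose difference counts the nonzero diagonal entries of
valuation at least `i`. -/

open Finset

theorem IsLocalRing.mem_maximalIdeal_of_mul_mem {R : Type*} [CommRing R] [IsLocalRing R]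
    {I : Ideal R} {d x : R} (hd : d ∉ I) (hdx : d * x ∈ I) : x ∈ maximalIdeal R := by
  by_contra hx
  exact hd ((I.mul_unit_mem_iff_mem (notMem_maximalIdeal.mp hx)).mp hdx)

theorem PadicInt.notMem_span_pow_iff {p : ℕ} [Fact p.Prime] {x : ℤ_[p]} {i : ℕ} :
    x ∉ Ideal.span {(p : ℤ_[p]) ^ i} ↔ x ≠ 0 ∧ x.valuation < i := by
  by_cases hx : x = 0
  · simp [hx]
  · simp [hx, mem_span_pow_iff_le_valuation x hx]

theorem finsum_card_fiber_eq_card_filter_le {α : Type*} (T : Finset α) (f : α → ℕ) (i : ℕ) :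
    ∑ᶠ (k : ℕ) (_ : i ≤ k), #{t ∈ T | f t = k} = #{t ∈ T | i ≤ f t} := by
  classical
  have hsupp : (Function.support fun k => ∑ᶠ (_ : i ≤ k), #{t ∈ T | f t = k}) ⊆ T.image f := by
    intro k hk
    rw [Function.mem_support, finsum_eq_if, ite_ne_right_iff] at hk
    obtain ⟨t, ht⟩ := card_ne_zero.mp hk.2
    rw [mem_filter] at ht
    exact mem_image.mpr ⟨t, ht⟩
  rw [finsum_eq_finsetSum_of_support_subset _ hsupp,
    card_eq_sum_card_fiberwise fun t ht => mem_image_of_mem f (mem_filter.mp ht).1]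
  refine sum_congr rfl fun k _ => ?_
  rw [finsum_eq_if, filter_filter]
  split_ifs with hik
  · exact congrArg card (filter_congr fun t _ => by constructor <;> intro h <;> omega)
  · exact (card_eq_zero.mpr (filter_false_of_mem fun t _ => by omega)).symm

namespace Matrix

variable {m n R : Type*}

def mulVecPreimage [Semiring R] [Fintype n] (A : Matrix m n R) (I : Ideal R) : Set (n → R) :=
  {x | ∀ r, (A *ᵥ x) r ∈ I}

theorem mulVecPreimage_span_singleton [CommSemiring R] [Fintype n] (A : Matrix m n R) (a : R) :
    A.mulVecPreimage (Ideal.span {a}) = {x | ∀ r, a ∣ (A *ᵥ x) r} := by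
  simp only [mulVecPreimage, Ideal.mem_span_singleton]

theorem mulVecPreimage_bot [Semiring R] [Fintype n] (A : Matrix m n R) :
    A.mulVecPreimage ⊥ = {x | A *ᵥ x = 0} := by
  simp only [mulVecPreimage, Ideal.mem_bot, funext_iff, Pi.zero_apply]

theorem mulVec_apply_mem_of_forall_mem [Semiring R] [Fintype n] (M : Matrix m n R)
    {I : Ideal R} {v : n → R} (hv : ∀ j, v j ∈ I) (r : m) : (M *ᵥ v) r ∈ I :=
  I.sum_mem fun j _ => I.mul_mem_left _ (hv j)

theorem mulVecPreimage_eq_image [CommRing R] [Fintype m] [Fintype n] [DecidableEq m]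
    [DecidableEq n] (A : Matrix m n R) (I : Ideal R) {P : Matrix m m R} {Q : Matrix n n R}
    (hP : IsUnit P.det) (hQ : IsUnit Q.det) :
    A.mulVecPreimage I = Q.mulVec '' (P * A * Q).mulVecPreimage I := by
  have hPAQ : ∀ y, (P * A * Q) *ᵥ y = P *ᵥ (A *ᵥ (Q *ᵥ y)) := by
    simp [mulVec_mulVec, Matrix.mul_assoc]
  have hQQ : ∀ v, Q *ᵥ (Q⁻¹ *ᵥ v) = v := by simp [mulVec_mulVec, mul_nonsing_inv _ hQ]
  have hPP : ∀ v, P⁻¹ *ᵥ (P *ᵥ v) = v := by simp [mulVec_mulVec, nonsing_inv_mul _ hP]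
  ext x
  constructor
  · intro hx
    refine ⟨Q⁻¹ *ᵥ x, fun r => ?_, hQQ x⟩
    rw [hPAQ, hQQ]
    exact P.mulVec_apply_mem_of_forall_mem hx r
  · rintro ⟨y, hy, rfl⟩ r
    rw [← hPP (A *ᵥ (Q *ᵥ y)), ← hPAQ]
    exact P⁻¹.mulVec_apply_mem_of_forall_mem hy r

end Matrix

section RectangularDiagonal

variable {R : Type*} {m n : ℕ} {D : Matrix (Fin m) (Fin n) R}

theorem Matrix.mulVec_apply_eq_of_offDiag [NonUnitalNonAssocSemiring R]
    (hD : ∀ (i : Fin m) (j : Fin n), (i : ℕ) ≠ (j : ℕ) → D i j = 0) {r : Fin m} {j : Fin n}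
    (hrj : (r : ℕ) = j) (x : Fin n → R) : (D *ᵥ x) r = D r j * x j :=
  Fintype.sum_eq_single j fun j' hj' =>
    mul_eq_zero_of_left (hD r j' fun h => hj' (Fin.ext (h ▸ hrj))) _

theorem Matrix.injOn_snd_of_offDiag [Zero R]
    (hD : ∀ (i : Fin m) (j : Fin n), (i : ℕ) ≠ (j : ℕ) → D i j = 0) :
    Set.InjOn Prod.snd {ij : Fin m × Fin n | D ij.1 ij.2 ≠ 0} := by
  rintro ⟨r, j⟩ hrj ⟨r', j'⟩ hrj' (rfl : j = j')
  have h : (r : ℕ) = j := not_not.mp (mt (hD r j) hrj)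
  have h' : (r' : ℕ) = j := not_not.mp (mt (hD r' j) hrj')
  simp only [Prod.mk.injEq, and_true]
  exact Fin.ext (h.trans h'.symm)

end RectangularDiagonal

section DimBar

variable {p : ℕ} [Fact p.Prime] {n : ℕ}

theorem dimBar_image_mulVec {Q : Matrix (Fin n) (Fin n) ℤ_[p]} (hQ : IsUnit Q.det)
    (S : Set (Fin n → ℤ_[p])) : dimBar p (Q.mulVec '' S) = dimBar p S := by
  set Qbar := Q.map (PadicInt.toZMod : ℤ_[p] →+* ZMod p)
  have hQbar : IsUnit Qbar.det := (RingHom.map_det PadicInt.toZMod Q) ▸ hQ.map _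
  let Qlin := Qbar.toLinearEquiv' (Qbar.invertibleOfIsUnitDet hQbar)
  have himg : (fun x : Fin n → ℤ_[p] => fun j => PadicInt.toZMod (x j)) '' (Q.mulVec '' S)
      = Qlin '' ((fun x : Fin n → ℤ_[p] => fun j => PadicInt.toZMod (x j)) '' S) := by
    simp only [Set.image_image]
    exact Set.image_congr fun x _ => funext fun j => RingHom.map_mulVec _ Q x j
  rw [dimBar, himg, ← LinearEquiv.coe_coe, Submodule.span_image, LinearEquiv.finrank_map_eq,
    dimBar]

theorem dimBar_add_card_eq {S : Set (Fin n → ℤ_[p])} (C : Finset (Fin n))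
    (h_red : ∀ x ∈ S, ∀ j ∈ C, x j ∈ IsLocalRing.maximalIdeal ℤ_[p])
    (h_mem : ∀ x : Fin n → ℤ_[p], (∀ j ∈ C, x j = 0) → x ∈ S) : dimBar p S + #C = n := by
  let restrict := LinearMap.funLeft (ZMod p) (ZMod p) ((↑) : C → Fin n)
  have hker : ∀ y, y ∈ LinearMap.ker restrict ↔ ∀ j ∈ C, y j = 0 := fun y => by
    simp [restrict, funext_iff, LinearMap.funLeft]
  have himg : (fun x : Fin n → ℤ_[p] => fun j => PadicInt.toZMod (x j)) '' S
      = LinearMap.ker restrict := by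
    ext y
    rw [SetLike.mem_coe, hker]
    constructor
    · rintro ⟨x, hx, rfl⟩ j hj
      rw [← RingHom.mem_ker, PadicInt.ker_toZMod]
      exact h_red x hx j hj
    · intro hy
      obtain ⟨lift, hlift⟩ := (ZMod.ringHom_surjective (PadicInt.toZMod (p := p))).hasRightInverse
      refine ⟨fun j => if j ∈ C then 0 else lift (y j), h_mem _ fun j hj => if_pos hj,
        funext fun j => ?_⟩
      dsimp only
      split_ifs with hj
      · rw [map_zero, hy j hj]
      · exact hlift (y j)
  have hrank := LinearMap.finrank_range_add_finrank_ker restrict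
  rw [LinearMap.range_eq_top.mpr
      (LinearMap.funLeft_surjective_of_injective _ _ _ Subtype.val_injective),
    finrank_top] at hrank
  simp only [Module.finrank_fintype_fun_eq_card, Fintype.card_coe, Fintype.card_fin] at hrank
  rw [dimBar, himg, Submodule.span_eq]
  omega

open scoped Classical in
theorem dimBar_mulVecPreimage_add_card {m : ℕ} {D : Matrix (Fin m) (Fin n) ℤ_[p]}
    (hD : ∀ (i : Fin m) (j : Fin n), (i : ℕ) ≠ (j : ℕ) → D i j = 0) (I : Ideal ℤ_[p]) :
    dimBar p (D.mulVecPreimage I) + #{ij : Fin m × Fin n | D ij.1 ij.2 ∉ I} = n := by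
  have hne : ∀ ij ∈ ({ij : Fin m × Fin n | D ij.1 ij.2 ∉ I} : Finset _), D ij.1 ij.2 ≠ 0 :=
    fun ij hij h => (mem_filter.mp hij).2 (h ▸ I.zero_mem)
  rw [← card_image_of_injOn ((D.injOn_snd_of_offDiag hD).mono fun ij hij => hne ij hij)]
  refine dimBar_add_card_eq _ (fun x hx j hj => ?_) fun x hx r => ?_
  · obtain ⟨⟨r, j⟩, hrj, rfl⟩ := mem_image.mp hj
    have hmem := hx r
    rw [D.mulVec_apply_eq_of_offDiag hD (not_not.mp (mt (hD r j) (hne _ hrj)))] at hmem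
    exact IsLocalRing.mem_maximalIdeal_of_mul_mem (mem_filter.mp hrj).2 hmem
  · change ∑ j, D r j * x j ∈ I
    refine I.sum_mem fun j _ => ?_
    by_cases hrj : D r j ∈ I
    · exact I.mul_mem_right _ hrj
    · rw [hx j (mem_image_of_mem Prod.snd (mem_filter.mpr ⟨mem_univ (r, j), hrj⟩)), mul_zero]
      exact I.zero_mem

end DimBar

/-- **Lemma (first part).** Let `η : ℤₚⁿ → ℤₚᵐ` be given by a matrix `A` which has a
Smith normal form whose diagonal has exactly `e i` entries of valuation `i` (the rest
being zero).  With `Mᵢ = {x : η x ∈ pⁱℤₚᵐ}`, we have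
`dim M̄ᵢ = dim (ker η)‾ + eᵢ + e_{i+1} + ⋯`. -/
theorem dim_Mbar (p : ℕ) [Fact p.Prime] (n m : ℕ)
    (A : Matrix (Fin m) (Fin n) ℤ_[p]) (e : ℕ → ℕ)
    (hSNF : ∃ (P : Matrix (Fin m) (Fin m) ℤ_[p]) (Q : Matrix (Fin n) (Fin n) ℤ_[p]),
      IsUnit P.det ∧ IsUnit Q.det ∧
      (∀ (i : Fin m) (j : Fin n), (i : ℕ) ≠ (j : ℕ) → (P * A * Q) i j = 0) ∧
      (∀ k : ℕ, e k = Nat.card {ij : Fin m × Fin n //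
        (P * A * Q) ij.1 ij.2 ≠ 0 ∧ ((P * A * Q) ij.1 ij.2).valuation = (k : ℤ)})) :
    ∀ i : ℕ,
      dimBar p {x : Fin n → ℤ_[p] | ∀ j, (p : ℤ_[p]) ^ i ∣ A.mulVec x j} =
        dimBar p {x : Fin n → ℤ_[p] | A.mulVec x = 0} + ∑ᶠ (k : ℕ) (_ : i ≤ k), e k := by
  classical
  obtain ⟨P, Q, hP, hQ, hD, he⟩ := hSNF
  intro i
  set D := P * A * Q
  have hM : {x : Fin n → ℤ_[p] | ∀ j, (p : ℤ_[p]) ^ i ∣ A.mulVec x j}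
      = Q.mulVec '' D.mulVecPreimage (Ideal.span {(p : ℤ_[p]) ^ i}) := by
    rw [← mulVecPreimage_span_singleton, A.mulVecPreimage_eq_image _ hP hQ]
  have hK : {x : Fin n → ℤ_[p] | A.mulVec x = 0} = Q.mulVec '' D.mulVecPreimage ⊥ := by
    rw [← mulVecPreimage_bot, A.mulVecPreimage_eq_image _ hP hQ]
  have hsum : ∑ᶠ (k : ℕ) (_ : i ≤ k), e k
      = #{ij ∈ {ij : Fin m × Fin n | D ij.1 ij.2 ≠ 0} | i ≤ (D ij.1 ij.2).valuation} := by
    simp only [he, Nat.card_eq_fintype_card, Fintype.card_subtype, Nat.cast_inj, ← filter_filter]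
    exact finsum_card_fiber_eq_card_filter_le _ _ i
  have hdimM := dimBar_mulVecPreimage_add_card hD (Ideal.span {(p : ℤ_[p]) ^ i})
  have hdimK := dimBar_mulVecPreimage_add_card hD ⊥
  simp only [PadicInt.notMem_span_pow_iff, Ideal.mem_bot, ← ne_eq, ← filter_filter] at hdimM hdimK
  have hsplit := card_filter_add_card_filter_not (s := {ij : Fin m × Fin n | D ij.1 ij.2 ≠ 0})
    (p := fun ij => (D ij.1 ij.2).valuation < i)
  simp only [not_lt] at hsplit
  rw [hM, hK, dimBar_image_mulVec hQ, dimBar_image_mulVec hQ, hsum]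
  omega
end

section
/- Let Γ be a Moore(57,2) graph. Then every element of the critical group K(Γ) is annihilated by 3250 = 2 · 5³ · 13; that is, the exponent of the finite abelian group K(Γ) divides 2 · 5³ · 13. Equivalently, every elementary divisor of the Laplacian matrix L of Γ lies in the set {1, 2, 13, 5, 5², 5³, 2·5ⁱ·13-divisors}, i.e., divides 2·5³·13. -/
/-! A Moore graph of valency `k` is strongly regular with parameters `(k² + 1, k, 0, 1)`, so its
adjacency matrix satisfies `A² = (k - 1)I - A + J`. Hence the Laplacian `L = kI - A` satisfies
`L((2k + 1)I - L) = (k² + 1)I - J`, while `JL = 0`. If `a • v ∈ im L` with `a ≠ 0`, then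
`a • Jv = 0`, so `Jv = 0` and `(k² + 1) • v = L((2k + 1)v - Lv) ∈ im L`. -/

open SimpleGraph Matrix

/-- The cokernel of the Laplacian matrix of a graph on `Fin 3250`,
viewed as a `ℤ`-linear map `ℤ^V → ℤ^V`. -/
noncomputable abbrev lapCoker (G : SimpleGraph (Fin 3250)) [DecidableRel G.Adj] :=
  (Fin 3250 → ℤ) ⧸ LinearMap.range (Matrix.mulVecLin (G.lapMatrix ℤ))

/-- The critical group: the torsion subgroup of the cokernel of the Laplacian. -/
noncomputable abbrev criticalGroup (G : SimpleGraph (Fin 3250)) [DecidableRel G.Adj] :=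
  Submodule.torsion ℤ (lapCoker G)

namespace SimpleGraph

variable {V R : Type*} [DecidableEq V] (G : SimpleGraph V) [DecidableRel G.Adj]

theorem adjMatrix_compl_eq [Ring R] : Gᶜ.adjMatrix R = of 1 - 1 - G.adjMatrix R := by
  rw [← adjMatrix_completeGraph_eq_of_one_sub_one,
    ← (isCompl_compl (x := G)).adjMatrix_add_adjMatrix_eq_adjMatrix_completeGraph R,
    add_sub_cancel_left]

variable {G} [Fintype V]

theorem IsRegularOfDegree.lapMatrix_eq [Ring R] {k : ℕ} (hG : G.IsRegularOfDegree k) :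
    G.lapMatrix R = k • 1 - G.adjMatrix R := by
  ext i j
  simp only [lapMatrix, degMatrix, Matrix.sub_apply, Matrix.smul_apply, diagonal_apply, one_apply,
    hG.degree_eq]
  split_ifs <;> simp

variable (G) in
theorem of_one_mul_lapMatrix [Ring R] : of 1 * G.lapMatrix R = 0 := by
  ext i j
  simp only [mul_apply, of_apply, Pi.one_apply, one_mul, Matrix.zero_apply]
  simp_rw [(G.isSymm_lapMatrix R).apply]
  simpa [mulVec, dotProduct] using congrFun (G.lapMatrix_mulVec_const_eq_zero (R := R)) j

theorem IsSRGWith.lapMatrix_mul_eq_of_moore [CommRing R] {n k : ℕ} (hG : G.IsSRGWith n k 0 1) :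
    G.lapMatrix R * ((2 * k + 1) • 1 - G.lapMatrix R) = (k ^ 2 + 1) • 1 - of 1 := by
  have hsq := hG.matrix_eq (α := R)
  rw [adjMatrix_compl_eq, zero_smul, add_zero, one_smul, pow_two] at hsq
  rw [hG.regular.lapMatrix_eq]
  calc (k • 1 - G.adjMatrix R) * ((2 * k + 1) • 1 - (k • 1 - G.adjMatrix R))
      = (k * (k + 1)) • 1 - G.adjMatrix R - G.adjMatrix R * G.adjMatrix R := by
        simp only [mul_sub, sub_mul, smul_mul_assoc, mul_smul_comm, one_mul, mul_one]
        module
    _ = (k ^ 2 + 1) • 1 - of 1 := by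
        rw [hsq]
        module

end SimpleGraph

namespace Matrix

variable {ι R : Type*} [Fintype ι] [DecidableEq ι] [CommRing R]

theorem smul_eq_zero_of_mem_torsion_coker {M N P : Matrix ι ι R} {m : R}
    (hMN : M * N = m • 1 - P) (hPM : P * M = 0)
    {x : (ι → R) ⧸ LinearMap.range M.mulVecLin} (hx : x ∈ Submodule.torsion R _) :
    m • x = 0 := by
  obtain ⟨a, ha⟩ := hx
  obtain ⟨v, rfl⟩ := Submodule.Quotient.mk_surjective _ x
  rw [← Submodule.Quotient.mk_smul, Submodule.Quotient.mk_eq_zero] at ha ⊢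
  obtain ⟨w, hw⟩ := ha
  have hPv : P *ᵥ v = 0 := by
    have : (a : R) • (P *ᵥ v) = 0 := by
      rw [← mulVec_smul, ← Submonoid.smul_def, ← hw, mulVecLin_apply, mulVec_mulVec, hPM,
        zero_mulVec]
    funext i
    exact (mem_nonZeroDivisors_iff.mp a.2).1 _ (by simpa [mul_comm] using congrFun this i)
  refine ⟨N *ᵥ v, ?_⟩
  rw [mulVecLin_apply, mulVec_mulVec, hMN, sub_mulVec, hPv, sub_zero, smul_mulVec, one_mulVec]

end Matrix

/-- For a Moore(57,2) graph, every element of the critical group is annihilated by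
`3250 = 2·5³·13`; i.e. the exponent of the critical group divides `2·5³·13`. -/
theorem moore_critical_group_exponent (G : SimpleGraph (Fin 3250)) [DecidableRel G.Adj]
    (h : G.IsSRGWith 3250 57 0 1) :
    (∀ x : criticalGroup G, (3250 : ℕ) • x = 0) ∧
      AddMonoid.exponent (criticalGroup G) ∣ 2 * 5 ^ 3 * 13 := by
  have hL := h.lapMatrix_mul_eq_of_moore (R := ℤ)
  rw [← Nat.cast_smul_eq_nsmul ℤ (57 ^ 2 + 1)] at hL
  have hkill (x : criticalGroup G) : (3250 : ℕ) • x = 0 := by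
    ext
    rw [AddSubmonoidClass.coe_nsmul, ZeroMemClass.coe_zero, ← Nat.cast_smul_eq_nsmul ℤ]
    exact smul_eq_zero_of_mem_torsion_coker hL G.of_one_mul_lapMatrix x.2
  exact ⟨hkill, AddMonoid.exponent_dvd_iff_forall_nsmul_eq_zero.mpr hkill⟩
end
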